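/- Let G be a strongly connected digraph. G has the Riemann–Roch property (i.e., there exist a chip-distribution K and an integer t such that dist(x) − dist(K − x) = t − deg(x) for every chip-distribution x) if and only if every minimally non-terminating chip-distribution on G has degree dist(0) and there exists a chip-distribution K such that for every minimally non-terminating chip-distribution x, K − x is also minimally non-terminating; moreover, in this case the Riemann–Roch formula holds with this K as canonical distribution and t = dist(0). -/

import Mathlib

open Finset

variable {V : Type} [Fintype V] [DecidableEq V]

/-- The outdegree of a vertex `v` in the multidigraph with multiplicity function `m`
(`m u v` is the number of directed edges from `u` to `v`). -/
def outdeg (m : V → V → ℕ) (v : V) : ℤ := ∑ u, (m v u : ℤ)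

/-- The indegree of a vertex. -/
def indeg (m : V → V → ℕ) (v : V) : ℤ := ∑ u, (m u v : ℤ)

/-- The digraph is loopless. -/
def Loopless (m : V → V → ℕ) : Prop := ∀ v, m v v = 0

/-- The digraph is strongly connected: every vertex reaches every vertex on a directed path. -/
def StronglyConnected (m : V → V → ℕ) : Prop :=
  ∀ u v : V, Relation.ReflTransGen (fun a b => 0 < m a b) u v

/-- Firing vertex `v` in chip-distribution `x`: `v` sends a chip along each outgoing edge. -/
def fire (m : V → V → ℕ) (x : V → ℤ) (v : V) : V → ℤ :=
  fun u => x u + (m v u : ℤ) - (if u = v then outdeg m v else 0)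

/-- The degree (total number of chips) of a chip-distribution / divisor. -/
def degSum (x : V → ℤ) : ℤ := ∑ v, x v

/-- The state of the chip-firing game after `n` steps, starting from `x` and
firing the vertices `s 0, s 1, …` in this order. -/
def gameState (m : V → V → ℕ) (x : V → ℤ) (s : ℕ → V) : ℕ → (V → ℤ)
  | 0 => x
  | n + 1 => fire m (gameState m x s n) (s n)

/-- `s` encodes an infinite legal chip-firing game starting from `x`:
at each step the fired vertex is active. -/
def InfGame (m : V → V → ℕ) (x : V → ℤ) (s : ℕ → V) : Prop :=
  ∀ n, outdeg m (s n) ≤ gameState m x s n (s n)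

/-- A chip-distribution is terminating if no infinite legal game starts from it. -/
def Terminating (m : V → V → ℕ) (x : V → ℤ) : Prop :=
  ¬ ∃ s : ℕ → V, InfGame m x s

/-- The Laplacian of the digraph applied to `z`. -/
def lap (m : V → V → ℕ) (z : V → ℤ) : V → ℤ :=
  fun u => (∑ v, (m v u : ℤ) * z v) - outdeg m u * z u

/-- Linear equivalence: `x ∼ y` iff `x = y + L z` for some integer vector `z`. -/
def LinEquiv (m : V → V → ℕ) (x y : V → ℤ) : Prop :=
  ∃ z : V → ℤ, x = y + lap m z

/-- The distance of `x` from the non-terminating distributions: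
the minimum degree of a nonnegative `y` such that `x + y` is non-terminating. -/
noncomputable def chipDist (m : V → V → ℕ) (x : V → ℤ) : ℕ :=
  sInf {n : ℕ | ∃ y : V → ℤ, 0 ≤ y ∧ degSum y = (n : ℤ) ∧ ¬ Terminating m (x + y)}

/-- A chip-distribution is minimally non-terminating if it is non-terminating
but removing one chip from any vertex makes it terminating. -/
def MinNonTerm (m : V → V → ℕ) (x : V → ℤ) : Prop :=
  ¬ Terminating m x ∧
    ∀ v : V, Terminating m (fun u => x u - (if u = v then 1 else 0))

/-! A non-terminating game on a strongly connected digraph eventually fires every vertex (the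
chips on the set of vertices fired infinitely often would otherwise leak along an edge leaving it),
after which every vertex holds a nonnegative number of chips. Hence every non-terminating
distribution has degree at least `dist 0`, descends to a minimally non-terminating one, and
`dist x = min {deg (z - x)⁺ : z minimally non-terminating}`.

If the minimally non-terminating distributions all have degree `t` and are permuted by
`z ↦ K - z`, comparing the minimizers for `x` and for `K - x` gives both inequalities of the
Riemann–Roch formula. Conversely, the formula at `0` and at `K` forces `deg K = 2t`, the formula
at a non-terminating `w` reads `dist (K - w) = deg w - t`, and minimality of `z` then forces
`deg z = t`, that is `dist (K - z) = 0`, and `dist (K - z - 1_v) = 1`. -/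

lemma Relation.ReflTransGen.exists_rel_of_not {α : Type*} {r : α → α → Prop}
    {P : α → Prop} {a b : α} (h : Relation.ReflTransGen r a b) (ha : P a) (hb : ¬P b) :
    ∃ u w, P u ∧ ¬P w ∧ r u w := by
  induction h with
  | refl => exact absurd ha hb
  | @tail c b _ hcb ih =>
    by_cases hc : P c
    · exact ⟨c, b, hc, hb, hcb⟩
    · exact ih hc

section ChipFiring

open Filter

variable {m : V → V → ℕ} {x y : V → ℤ} {s : ℕ → V} {u v w : V}

omit [DecidableEq V] in
lemma degSum_zero : degSum (0 : V → ℤ) = 0 :=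
  Finset.sum_const_zero

omit [DecidableEq V] in
lemma degSum_add (x y : V → ℤ) : degSum (x + y) = degSum x + degSum y :=
  Finset.sum_add_distrib

omit [DecidableEq V] in
lemma degSum_sub (x y : V → ℤ) : degSum (x - y) = degSum x - degSum y :=
  Finset.sum_sub_distrib ..

omit [DecidableEq V] in
lemma degSum_mono (h : x ≤ y) : degSum x ≤ degSum y :=
  Finset.sum_le_sum fun v _ => h v

lemma degSum_single (v : V) : degSum (Pi.single v (1 : ℤ)) = 1 := by
  simp [degSum]

omit [DecidableEq V] in
lemma degSum_posPart_sub_degSum_posPart_neg (w : V → ℤ) :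
    degSum w⁺ - degSum (-w)⁺ = degSum w := by
  rw [← degSum_sub, posPart_neg, posPart_sub_negPart]

omit [Fintype V] in
lemma fun_sub_ite_eq_sub_single (x : V → ℤ) (v : V) :
    (fun u => x u - if u = v then 1 else 0) = x - Pi.single v 1 := by
  ext u
  simp [Pi.single_apply]

lemma degSum_fire (m : V → V → ℕ) (x : V → ℤ) (v : V) :
    degSum (fire m x v) = degSum x := by
  simp [degSum, fire, Finset.sum_add_distrib, Finset.sum_sub_distrib, outdeg]

lemma fire_mono (h : x ≤ y) (v : V) : fire m x v ≤ fire m y v := fun u => by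
  simp only [fire]
  linarith [h u]

lemma fire_self_nonneg (hv : outdeg m v ≤ x v) : 0 ≤ fire m x v v := by
  simp only [fire, if_true]
  linarith [(m v v).cast_nonneg (α := ℤ)]

lemma le_fire_of_ne (huv : u ≠ v) (x : V → ℤ) : x u ≤ fire m x v u := by
  simp only [fire, if_neg huv]
  linarith [(m v u).cast_nonneg (α := ℤ)]

lemma min_zero_le_fire (hv : outdeg m v ≤ x v) (u : V) : min (x u) 0 ≤ fire m x v u := by
  obtain rfl | huv := eq_or_ne u v
  · exact (min_le_right _ _).trans (fire_self_nonneg hv)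
  · exact (min_le_left _ _).trans (le_fire_of_ne huv x)

lemma gameState_mono (h : x ≤ y) (s : ℕ → V) (n : ℕ) :
    gameState m x s n ≤ gameState m y s n := by
  induction n with
  | zero => exact h
  | succ n ih => exact fire_mono ih (s n)

lemma degSum_gameState (m : V → V → ℕ) (x : V → ℤ) (s : ℕ → V) (n : ℕ) :
    degSum (gameState m x s n) = degSum x := by
  induction n with
  | zero => rfl
  | succ n ih => rw [gameState, degSum_fire, ih]

lemma gameState_add (m : V → V → ℕ) (x : V → ℤ) (s : ℕ → V) (N n : ℕ) :
    gameState m x s (N + n) = gameState m (gameState m x s N) (fun i => s (N + i)) n := by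
  induction n with
  | zero => rfl
  | succ n ih => rw [← add_assoc, gameState, ih, gameState]

lemma InfGame.tail (hs : InfGame m x s) (N : ℕ) :
    InfGame m (gameState m x s N) (fun i => s (N + i)) := fun n => by
  rw [← gameState_add]
  exact hs (N + n)

lemma not_terminating_of_le (h : x ≤ y) (hx : ¬Terminating m x) : ¬Terminating m y := by
  simp only [Terminating, not_not] at hx ⊢
  obtain ⟨s, hs⟩ := hx
  exact ⟨s, fun n => (hs n).trans (gameState_mono h s n (s n))⟩

lemma InfGame.min_zero_le_gameState (hs : InfGame m x s) {n n' : ℕ} (h : n ≤ n') (v : V) :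
    min (gameState m x s n v) 0 ≤ gameState m x s n' v := by
  induction n', h using Nat.le_induction with
  | base => exact min_le_left _ _
  | succ n' _ ih =>
    exact (le_min ih (min_le_right _ _)).trans (min_zero_le_fire (hs n') v)

lemma InfGame.gameState_nonneg_of_lt (hs : InfGame m x s) {k n : ℕ} (hk : k < n) :
    0 ≤ gameState m x s n (s k) := by
  have hfired : 0 ≤ gameState m x s (k + 1) (s k) := fire_self_nonneg (hs k)
  simpa [min_eq_right hfired] using hs.min_zero_le_gameState hk (s k)

lemma sum_fire_add_le {A : Finset V} (hv : v ∈ A) (hw : w ∉ A) (x : V → ℤ) :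
    ∑ p ∈ A, fire m x v p + m v w ≤ ∑ p ∈ A, x p := by
  have hout : ∑ p ∈ insert w A, (m v p : ℤ) ≤ outdeg m v :=
    Finset.sum_le_univ_sum_of_nonneg fun _ => Nat.cast_nonneg _
  rw [Finset.sum_insert hw] at hout
  simp only [fire, Finset.sum_sub_distrib, Finset.sum_add_distrib, Finset.sum_ite_eq' A v,
    if_pos hv]
  linarith

/-- Once only vertices of `A` fire, the number of chips on `A` never increases and drops whenever
`u` fires; being bounded below, it is eventually constant. -/
lemma InfGame.not_frequently_of_eventually_mem (hs : InfGame m x s) {A : Finset V}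
    (hA : ∀ᶠ n in atTop, s n ∈ A) (hw : w ∉ A) (huw : 0 < m u w) :
    ¬∃ᶠ n in atTop, s n = u := by
  set Φ : ℕ → ℤ := fun n => ∑ p ∈ A, gameState m x s n p
  obtain ⟨N, hN⟩ := eventually_atTop.1 hA
  have hstep : ∀ n ≥ N, Φ (n + 1) + m (s n) w ≤ Φ n := fun n hn =>
    sum_fire_add_le (hN n hn) hw _
  have hanti : Antitone fun k => Φ (k + N) := antitone_nat_of_succ_le fun k => by
    have := hstep (k + N) (Nat.le_add_left N k)
    rw [add_right_comm]
    linarith [(m (s (k + N)) w).cast_nonneg (α := ℤ)]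
  have hbdd : BddBelow (Set.range fun k => Φ (k + N)) := by
    refine ⟨∑ p ∈ A, min (x p) 0, ?_⟩
    rintro _ ⟨k, rfl⟩
    exact Finset.sum_le_sum fun p _ => hs.min_zero_le_gameState (Nat.zero_le _) p
  have hconst : ∀ᶠ n in atTop, Φ n = ⨅ k, Φ (k + N) := by
    have := (tendsto_add_atTop_iff_nat N).1 (tendsto_atTop_ciInf hanti hbdd)
    rwa [nhds_discrete, tendsto_pure] at this
  intro hu
  obtain ⟨n, hnu, hn, hΦn, hΦn'⟩ := (hu.and_eventually ((eventually_ge_atTop N).and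
    (hconst.and ((tendsto_add_atTop_nat 1).eventually hconst)))).exists
  have := hstep n hn
  rw [hnu, hΦn, hΦn'] at this
  omega

lemma InfGame.frequently_eq (hconn : StronglyConnected m) (hs : InfGame m x s) (v : V) :
    ∃ᶠ n in atTop, s n = v := by
  classical
  set A : Finset V := Finset.univ.filter fun a => ∃ᶠ n in atTop, s n = a
  have hA : ∀ᶠ n in atTop, s n ∈ A := by
    have : ∀ᶠ n in atTop, ∀ a, s n = a → a ∈ A := eventually_all.2 fun a => by
      by_cases ha : ∃ᶠ n in atTop, s n = a
      · exact Eventually.of_forall fun _ _ => by simpa [A] using ha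
      · exact (not_frequently.1 ha).mono fun _ h h' => absurd h' h
    exact this.mono fun n h => h _ rfl
  by_contra hv
  obtain ⟨n₀, hn₀⟩ := hA.exists
  obtain ⟨u, w, hu, hw, huw⟩ :=
    (hconn (s n₀) v).exists_rel_of_not (P := (· ∈ A)) hn₀ (by simpa [A] using hv)
  exact hs.not_frequently_of_eventually_mem hA hw huw (by simpa [A] using hu)

lemma InfGame.eventually_nonneg (hconn : StronglyConnected m) (hs : InfGame m x s) :
    ∀ᶠ n in atTop, 0 ≤ gameState m x s n := by
  refine eventually_all.2 fun v => ?_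
  obtain ⟨k, hk⟩ := (hs.frequently_eq hconn v).exists
  filter_upwards [eventually_gt_atTop k] with n hn
  exact hk ▸ hs.gameState_nonneg_of_lt hn

end ChipFiring

section Distance

variable {m : V → V → ℕ} {x y z : V → ℤ}

lemma not_terminating_of_forall_exists_fire_mem {S : Set (V → ℤ)}
    (hS : ∀ y ∈ S, ∃ v, outdeg m v ≤ y v ∧ fire m y v ∈ S) (hx : x ∈ S) :
    ¬Terminating m x := by
  choose next hnext hnextS using fun y : S => hS y y.2
  let states : ℕ → S := fun n =>
    n.rec ⟨x, hx⟩ fun _ y => ⟨fire m y.1 (next y), hnextS y⟩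
  have hstates : ∀ n, gameState m x (fun n => next (states n)) n = (states n).1 := by
    intro n
    induction n with
    | zero => rfl
    | succ n ih => rw [gameState, ih]
  exact not_not.2 ⟨fun n => next (states n), fun n => hstates n ▸ hnext _⟩

lemma not_terminating_of_outdeg_le [Nonempty V] (hx : outdeg m ≤ x) : ¬Terminating m x := by
  have hx₀ : 0 ≤ x := fun v => (Finset.sum_nonneg fun _ _ => Nat.cast_nonneg _).trans (hx v)
  refine not_terminating_of_forall_exists_fire_mem (S := {y | 0 ≤ y ∧ degSum x ≤ degSum y})
    (fun y ⟨hy, hdeg⟩ => ?_) ⟨hx₀, le_rfl⟩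
  obtain ⟨v, hv⟩ : ∃ v, outdeg m v ≤ y v := by
    by_contra! h
    have := Finset.sum_lt_sum_of_nonempty Finset.univ_nonempty fun v _ => (h v).trans_le (hx v)
    exact this.not_ge hdeg
  refine ⟨v, hv, fun u => (le_min (hy u) le_rfl).trans (min_zero_le_fire hv u), ?_⟩
  rwa [degSum_fire]

lemma chipDist_le (hy : 0 ≤ y) (h : ¬Terminating m (x + y)) :
    (chipDist m x : ℤ) ≤ degSum y := by
  have hdeg : 0 ≤ degSum y := Finset.sum_nonneg fun v _ => hy v
  have : chipDist m x ≤ (degSum y).toNat :=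
    Nat.sInf_le ⟨y, hy, (Int.toNat_of_nonneg hdeg).symm, h⟩
  omega

lemma exists_chipDist_spec [Nonempty V] (m : V → V → ℕ) (x : V → ℤ) :
    ∃ y, 0 ≤ y ∧ degSum y = chipDist m x ∧ ¬Terminating m (x + y) := by
  have hne :
      {n : ℕ | ∃ y : V → ℤ, 0 ≤ y ∧ degSum y = n ∧ ¬Terminating m (x + y)}.Nonempty :=
    ⟨(degSum (outdeg m - x)⁺).toNat, (outdeg m - x)⁺, posPart_nonneg _,
      (Int.toNat_of_nonneg (Finset.sum_nonneg fun v _ => posPart_nonneg _)).symm,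
      not_terminating_of_outdeg_le ?_⟩
  · exact Nat.sInf_mem hne
  calc outdeg m = x + (outdeg m - x) := by abel
    _ ≤ x + (outdeg m - x)⁺ := by gcongr; exact le_posPart _

lemma chipDist_eq_zero_of_not_terminating (h : ¬Terminating m x) : chipDist m x = 0 := by
  have := chipDist_le (m := m) (le_refl 0) (by rwa [add_zero])
  rw [degSum_zero] at this
  omega

lemma not_terminating_of_chipDist_eq_zero [Nonempty V] (h : chipDist m x = 0) :
    ¬Terminating m x := by
  obtain ⟨y, hy, hdeg, hnt⟩ := exists_chipDist_spec m x
  rw [h, Nat.cast_zero, degSum, Finset.sum_eq_zero_iff_of_nonneg fun v _ => hy v] at hdeg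
  have : y = 0 := funext fun v => hdeg v (Finset.mem_univ v)
  rwa [this, add_zero] at hnt

lemma chipDist_zero_le_degSum (hconn : StronglyConnected m) (hx : ¬Terminating m x) :
    (chipDist m 0 : ℤ) ≤ degSum x := by
  obtain ⟨s, hs⟩ := not_not.1 hx
  obtain ⟨N, hN⟩ := (hs.eventually_nonneg hconn).exists
  rw [← degSum_gameState m x s N]
  exact chipDist_le hN (by rw [zero_add]; exact not_not.2 ⟨_, hs.tail N⟩)

lemma exists_minNonTerm_le (hconn : StronglyConnected m) (hx : ¬Terminating m x) :
    ∃ z, MinNonTerm m z ∧ z ≤ x := by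
  obtain ⟨d, ⟨z, hzx, hz, rfl⟩, hmin⟩ := Int.exists_least_of_bdd
    (P := fun d => ∃ z, z ≤ x ∧ ¬Terminating m z ∧ degSum z = d)
    ⟨chipDist m 0, fun _ ⟨z, _, hz, hd⟩ => hd ▸ chipDist_zero_le_degSum hconn hz⟩
    ⟨_, x, le_rfl, hx, rfl⟩
  refine ⟨z, ⟨hz, fun v => ?_⟩, hzx⟩
  by_contra hv
  rw [fun_sub_ite_eq_sub_single] at hv
  have := hmin _ ⟨_, (sub_le_self _ (Pi.single_nonneg.2 zero_le_one)).trans hzx, hv, rfl⟩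
  rw [degSum_sub, degSum_single] at this
  omega

end Distance

section MinNonTerm

variable {m : V → V → ℕ} {y z : V → ℤ}

lemma MinNonTerm.terminating_sub_single (hz : MinNonTerm m z) (v : V) :
    Terminating m (z - Pi.single v 1) :=
  fun_sub_ite_eq_sub_single z v ▸ hz.2 v

lemma MinNonTerm.eq_zero_of_not_terminating_sub (hz : MinNonTerm m z) (hy : 0 ≤ y)
    (h : ¬Terminating m (z - y)) : y = 0 := by
  by_contra hne
  obtain ⟨v, hv⟩ := Function.ne_iff.1 hne
  refine not_terminating_of_le (fun u => ?_) h (hz.terminating_sub_single v)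
  have hyu : 0 ≤ y u := hy u
  obtain rfl | huv := eq_or_ne u v
  · have : y u ≠ 0 := hv
    simp only [Pi.sub_apply, Pi.single_eq_same]
    omega
  · simpa [huv] using hyu

lemma exists_minNonTerm [Nonempty V] (hconn : StronglyConnected m) : ∃ z, MinNonTerm m z :=
  (exists_minNonTerm_le hconn (not_terminating_of_outdeg_le le_rfl)).imp fun _ h => h.1

lemma chipDist_le_degSum_posPart (hz : ¬Terminating m z) (x : V → ℤ) :
    (chipDist m x : ℤ) ≤ degSum (z - x)⁺ :=
  chipDist_le (posPart_nonneg _) <| not_terminating_of_le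
    (by simpa using add_le_add_right (le_posPart (z - x)) x) hz

lemma exists_minNonTerm_chipDist_eq [Nonempty V] (hconn : StronglyConnected m) (x : V → ℤ) :
    ∃ z, MinNonTerm m z ∧ (chipDist m x : ℤ) = degSum (z - x)⁺ := by
  obtain ⟨y, hy, hdeg, hnt⟩ := exists_chipDist_spec m x
  obtain ⟨z, hz, hzle⟩ := exists_minNonTerm_le hconn hnt
  refine ⟨z, hz, (chipDist_le_degSum_posPart hz.1 x).antisymm (hdeg ▸ degSum_mono ?_)⟩
  rw [posPart_def]
  exact sup_le (sub_le_iff_le_add'.2 hzle) hy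

end MinNonTerm

def RiemannRochFormula (m : V → V → ℕ) (K : V → ℤ) (t : ℤ) : Prop :=
  ∀ x : V → ℤ, (chipDist m x : ℤ) - (chipDist m (K - x) : ℤ) = t - degSum x

section RiemannRoch

variable {m : V → V → ℕ} {K w z : V → ℤ} {t : ℤ}

namespace RiemannRochFormula

lemma degSum_eq (h : RiemannRochFormula m K t) : degSum K = 2 * t := by
  have h0 := h 0
  have hK := h K
  rw [sub_zero, degSum_zero] at h0
  rw [sub_self] at hK
  linarith

lemma chipDist_sub_of_not_terminating (h : RiemannRochFormula m K t) (hw : ¬Terminating m w) :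
    (chipDist m (K - w) : ℤ) = degSum w - t := by
  have := h w
  rw [chipDist_eq_zero_of_not_terminating hw, Nat.cast_zero] at this
  linarith

/-- With `y` witnessing `dist (K - z)`, the formula at the non-terminating `K - z + y` gives
`dist (z - y) = 0`, so `y = 0` by minimality of `z`. -/
lemma degSum_eq_of_minNonTerm [Nonempty V] (h : RiemannRochFormula m K t)
    (hz : MinNonTerm m z) : degSum z = t := by
  obtain ⟨y, hy, hdeg, hnt⟩ := exists_chipDist_spec m (K - z)
  have hdist := h.chipDist_sub_of_not_terminating hz.1
  have hzy : ¬Terminating m (z - y) := by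
    refine not_terminating_of_chipDist_eq_zero ((Nat.cast_eq_zero (R := ℤ)).1 ?_)
    have := h.chipDist_sub_of_not_terminating hnt
    rw [show K - (K - z + y) = z - y by abel, degSum_add, degSum_sub, h.degSum_eq] at this
    linarith
  rw [hz.eq_zero_of_not_terminating_sub hy hzy, degSum_zero] at hdeg
  linarith

lemma minNonTerm_sub [Nonempty V] (h : RiemannRochFormula m K t) (hz : MinNonTerm m z) :
    MinNonTerm m (K - z) := by
  have hdist := h.chipDist_sub_of_not_terminating hz.1
  rw [h.degSum_eq_of_minNonTerm hz, sub_self] at hdist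
  refine ⟨not_terminating_of_chipDist_eq_zero (by exact_mod_cast hdist), fun v => ?_⟩
  have hzv : ¬Terminating m (z + Pi.single v 1) :=
    not_terminating_of_le (le_add_of_nonneg_right (Pi.single_nonneg.2 zero_le_one)) hz.1
  have := h.chipDist_sub_of_not_terminating hzv
  rw [degSum_add, degSum_single, h.degSum_eq_of_minNonTerm hz] at this
  rw [fun_sub_ite_eq_sub_single, sub_sub]
  by_contra hnt
  rw [chipDist_eq_zero_of_not_terminating hnt] at this
  omega

lemma eq_chipDist_zero [Nonempty V] (hconn : StronglyConnected m)
    (h : RiemannRochFormula m K t) : t = chipDist m 0 := by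
  obtain ⟨y, -, hdeg, hnt⟩ := exists_chipDist_spec m 0
  rw [zero_add] at hnt
  have := h.chipDist_sub_of_not_terminating hnt
  obtain ⟨z, hz⟩ := exists_minNonTerm hconn
  have := chipDist_zero_le_degSum hconn hz.1
  rw [h.degSum_eq_of_minNonTerm hz] at this
  omega

end RiemannRochFormula

/-- A minimally non-terminating `z` attaining `dist x` has reflection `K - z` non-terminating, and
`(z - x)⁺` and `(x - z)⁺` differ in degree by `deg z - deg x = t - deg x`. -/
lemma sub_degSum_le_chipDist_sub [Nonempty V] (hconn : StronglyConnected m)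
    (hdeg : ∀ z, MinNonTerm m z → degSum z = t)
    (hK : ∀ z, MinNonTerm m z → MinNonTerm m (K - z)) (x : V → ℤ) :
    t - degSum x ≤ (chipDist m x : ℤ) - chipDist m (K - x) := by
  obtain ⟨z, hz, hdist⟩ := exists_minNonTerm_chipDist_eq hconn x
  have := chipDist_le_degSum_posPart (hK z hz).1 (K - x)
  rw [sub_sub_sub_cancel_left, ← neg_sub z x] at this
  have := degSum_posPart_sub_degSum_posPart_neg (z - x)
  rw [degSum_sub, hdeg z hz] at this
  linarith

lemma riemannRochFormula_of_minNonTerm [Nonempty V] (hconn : StronglyConnected m)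
    (hdeg : ∀ z, MinNonTerm m z → degSum z = t)
    (hK : ∀ z, MinNonTerm m z → MinNonTerm m (K - z)) :
    RiemannRochFormula m K t := by
  obtain ⟨z, hz⟩ := exists_minNonTerm hconn
  have hdegK : degSum K = 2 * t := by
    have := hdeg _ (hK z hz)
    rw [degSum_sub, hdeg z hz] at this
    linarith
  intro x
  have h₁ := sub_degSum_le_chipDist_sub hconn hdeg hK x
  have h₂ := sub_degSum_le_chipDist_sub hconn hdeg hK (K - x)
  rw [sub_sub_cancel, degSum_sub, hdegK] at h₂
  linarith

end RiemannRoch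

theorem riemann_roch_characterization_general
    {V : Type} [Fintype V] [DecidableEq V] [Nonempty V]
    (m : V → V → ℕ) (hconn : StronglyConnected m) :
    ((∃ K : V → ℤ, ∃ t : ℤ,
        ∀ x : V → ℤ, (chipDist m x : ℤ) - (chipDist m (K - x) : ℤ) = t - degSum x)
      ↔ ((∀ x : V → ℤ, MinNonTerm m x → degSum x = (chipDist m (0 : V → ℤ) : ℤ)) ∧
          ∃ K : V → ℤ, ∀ x : V → ℤ, MinNonTerm m x → MinNonTerm m (K - x)))
    ∧ (∀ K : V → ℤ,
        (∀ x : V → ℤ, MinNonTerm m x → degSum x = (chipDist m (0 : V → ℤ) : ℤ)) →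
        (∀ x : V → ℤ, MinNonTerm m x → MinNonTerm m (K - x)) →
        ∀ x : V → ℤ, (chipDist m x : ℤ) - (chipDist m (K - x) : ℤ)
          = (chipDist m (0 : V → ℤ) : ℤ) - degSum x) := by
  refine ⟨⟨fun ⟨K, t, h⟩ => ?_,
    fun ⟨hdeg, K, hK⟩ => ⟨K, _, riemannRochFormula_of_minNonTerm hconn hdeg hK⟩⟩,
    fun K hdeg hK => riemannRochFormula_of_minNonTerm hconn hdeg hK⟩
  have h : RiemannRochFormula m K t := h
  obtain rfl := h.eq_chipDist_zero hconn
  exact ⟨fun z hz => h.degSum_eq_of_minNonTerm hz, K, fun z hz => h.minNonTerm_sub hz⟩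

/-- A strongly connected digraph has the Riemann–Roch property iff every minimally
non-terminating chip-distribution has degree `dist(0)` and there is a `K` such that
`K - x` is minimally non-terminating whenever `x` is; moreover, in this case the
Riemann–Roch formula holds with this `K` as canonical distribution and `t = dist(0)`. -/
theorem riemann_roch_characterization
    {V : Type} [Fintype V] [DecidableEq V] [Nonempty V]
    (m : V → V → ℕ) (hloop : Loopless m) (hconn : StronglyConnected m) :
    ((∃ K : V → ℤ, ∃ t : ℤ,
        ∀ x : V → ℤ, (chipDist m x : ℤ) - (chipDist m (K - x) : ℤ) = t - degSum x)
      ↔ ((∀ x : V → ℤ, MinNonTerm m x → degSum x = (chipDist m (0 : V → ℤ) : ℤ)) ∧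
          ∃ K : V → ℤ, ∀ x : V → ℤ, MinNonTerm m x → MinNonTerm m (K - x)))
    ∧ (∀ K : V → ℤ,
        (∀ x : V → ℤ, MinNonTerm m x → degSum x = (chipDist m (0 : V → ℤ) : ℤ)) →
        (∀ x : V → ℤ, MinNonTerm m x → MinNonTerm m (K - x)) →
        ∀ x : V → ℤ, (chipDist m x : ℤ) - (chipDist m (K - x) : ℤ)
          = (chipDist m (0 : V → ℤ) : ℤ) - degSum x) :=
  riemann_roch_characterization_general m hconn
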